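/- Let λ_0 ∈ (0, ∞] and let φ : ℝ → [0, ∞] be an even function, finite on (-λ_0, λ_0), with φ(0) = 0, such that the map x ↦ φ(√x) is convex on [0, ∞). Let ξ, ξ_1, ξ_2, … be independent identically distributed real centered random variables and define the B(φ)-norm ‖η‖_{B(φ)} := inf{ τ ≥ 0 : for all λ ∈ (-λ_0, λ_0), E exp(λ η) ≤ exp(φ(λ τ)) } (with inf ∅ = ∞). If ‖ξ_1‖_{B(φ)} < ∞, then sup_{n ≥ 1} ‖ n^{-1/2} ∑_{i=1}^n ξ_i ‖_{B(φ)} = ‖ξ_1‖_{B(φ)}. -/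

import Mathlib

open MeasureTheory ProbabilityTheory Real ENNReal

/-- The exponential function on `[0, ∞]`, with `exp ∞ = ∞`. -/
noncomputable def eexp (x : ℝ≥0∞) : ℝ≥0∞ :=
  if x = ∞ then ∞ else ENNReal.ofReal (Real.exp x.toReal)

/-- The `B(φ)`-norm of a random variable `η`:
`inf { τ ≥ 0 : ∀ λ ∈ (-λ₀, λ₀), E exp(λ η) ≤ exp(φ(λ τ)) }`. -/
noncomputable def BphiNorm {Ω : Type*} [MeasurableSpace Ω] (μ : Measure Ω)
    (φ : ℝ → ℝ≥0∞) (lambda0 : ℝ≥0∞) (η : Ω → ℝ) : ℝ :=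
  sInf {τ : ℝ | 0 ≤ τ ∧ ∀ l : ℝ, ENNReal.ofReal |l| < lambda0 →
    ∫⁻ ω, ENNReal.ofReal (Real.exp (l * η ω)) ∂μ ≤ eexp (φ (l * τ))}

/-!
A scaling argument. Convexity of `x ↦ φ(√x)` together with `φ(0) = 0` gives
`φ(c t) ≤ c² φ(t)` for `0 ≤ c ≤ 1`. By independence and identical distribution,
`E exp(λ n^{-1/2} ∑ ξ_i) = (E exp(λ n^{-1/2} ξ_1))^n ≤ exp(n φ(λ n^{-1/2} τ)) ≤ exp(φ(λ τ))`
for every admissible `τ` of `ξ_1`, so `‖n^{-1/2} ∑ ξ_i‖_{B(φ)} ≤ ‖ξ_1‖_{B(φ)}`;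
the case `n = 1` is `ξ_1` itself.
-/

lemma eexp_mono : Monotone eexp := by
  intro a b hab
  unfold eexp
  rcases eq_or_ne b ∞ with rfl | hb
  · simp
  · have ha : a ≠ ∞ := ne_top_of_le_ne_top hb hab
    simp only [ha, hb, if_false]
    exact ENNReal.ofReal_le_ofReal (Real.exp_le_exp.2 (ENNReal.toReal_mono hb hab))

lemma eexp_pow (a : ℝ≥0∞) {n : ℕ} (hn : n ≠ 0) : eexp a ^ n = eexp (n * a) := by
  rcases eq_or_ne a ∞ with rfl | ha
  · simp [eexp, ENNReal.mul_top (Nat.cast_ne_zero.mpr hn), hn]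
  · have hna : (n : ℝ≥0∞) * a ≠ ∞ := ENNReal.mul_ne_top (ENNReal.natCast_ne_top n) ha
    simp only [eexp, ha, hna, if_false]
    rw [← ENNReal.ofReal_pow (Real.exp_nonneg _), ← Real.exp_nat_mul, ENNReal.toReal_mul,
      ENNReal.toReal_natCast]

lemma le_sq_mul_of_convexOn_comp_sqrt {φ : ℝ → ℝ≥0∞} (hφeven : ∀ x : ℝ, φ (-x) = φ x)
    (hφ0 : φ 0 = 0)
    (hφconv : ∀ x y t : ℝ, 0 ≤ x → 0 ≤ y → 0 ≤ t → t ≤ 1 →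
      φ (Real.sqrt (t * x + (1 - t) * y))
        ≤ ENNReal.ofReal t * φ (Real.sqrt x) + ENNReal.ofReal (1 - t) * φ (Real.sqrt y))
    {c : ℝ} (hc0 : 0 ≤ c) (hc1 : c ≤ 1) (t : ℝ) :
    φ (c * t) ≤ ENNReal.ofReal (c ^ 2) * φ t := by
  have hφabs : ∀ x : ℝ, φ |x| = φ x := fun x => by
    rcases abs_choice x with h | h <;> rw [h]
    exact hφeven x
  have h := hφconv (t ^ 2) 0 (c ^ 2) (sq_nonneg t) le_rfl (sq_nonneg c)
    (pow_le_one₀ hc0 hc1)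
  rwa [mul_zero, add_zero, Real.sqrt_zero, hφ0, mul_zero, add_zero, ← mul_pow,
    Real.sqrt_sq_eq_abs, Real.sqrt_sq_eq_abs, hφabs, hφabs] at h

section Independence

variable {Ω : Type*} [MeasurableSpace Ω] {μ : Measure Ω}

lemma lintegral_exp_mul_sum_of_iIndepFun {ι : Type*} {X : ι → Ω → ℝ}
    (hmeas : ∀ i, Measurable (X i)) (hIndep : iIndepFun X μ) (l : ℝ) (s : Finset ι) :
    ∫⁻ ω, ENNReal.ofReal (Real.exp (l * ∑ i ∈ s, X i ω)) ∂μ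
      = ∏ i ∈ s, ∫⁻ ω, ENNReal.ofReal (Real.exp (l * X i ω)) ∂μ := by
  have hu : Measurable fun x : ℝ => ENNReal.ofReal (Real.exp (l * x)) := by fun_prop
  have hprod := lintegral_prod_eq_prod_lintegral_of_indepFun s _
    (hIndep.comp (fun _ x => ENNReal.ofReal (Real.exp (l * x))) fun _ => hu)
    fun i => hu.comp (hmeas i)
  simp only [Function.comp_def] at hprod
  rw [← hprod]
  refine lintegral_congr fun ω => ?_
  rw [Finset.mul_sum, Real.exp_sum,
    ENNReal.ofReal_prod_of_nonneg fun _ _ => (Real.exp_nonneg _)]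

lemma lintegral_exp_mul_sum_range_of_iid {ξ : ℕ → Ω → ℝ} (hmeas : ∀ i, Measurable (ξ i))
    (hIndep : iIndepFun ξ μ) (hid : ∀ i, IdentDistrib (ξ i) (ξ 0) μ μ) (l : ℝ) (n : ℕ) :
    ∫⁻ ω, ENNReal.ofReal (Real.exp (l * ∑ i ∈ Finset.range n, ξ i ω)) ∂μ
      = (∫⁻ ω, ENNReal.ofReal (Real.exp (l * ξ 0 ω)) ∂μ) ^ n := by
  have hu : Measurable fun x : ℝ => ENNReal.ofReal (Real.exp (l * x)) := by fun_prop
  have h_eq : ∀ i, ∫⁻ ω, ENNReal.ofReal (Real.exp (l * ξ i ω)) ∂μ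
      = ∫⁻ ω, ENNReal.ofReal (Real.exp (l * ξ 0 ω)) ∂μ :=
    fun i => ((hid i).comp hu).lintegral_eq
  rw [lintegral_exp_mul_sum_of_iIndepFun hmeas hIndep, Finset.prod_congr rfl fun i _ => h_eq i,
    Finset.prod_const, Finset.card_range]

end Independence

section BphiNorm

variable {Ω : Type*} [MeasurableSpace Ω] {μ : Measure Ω} {φ : ℝ → ℝ≥0∞} {lambda0 : ℝ≥0∞}

def IsBphiBound (μ : Measure Ω) (φ : ℝ → ℝ≥0∞) (lambda0 : ℝ≥0∞) (η : Ω → ℝ) (τ : ℝ) : Prop :=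
  ∀ l : ℝ, ENNReal.ofReal |l| < lambda0 →
    ∫⁻ ω, ENNReal.ofReal (Real.exp (l * η ω)) ∂μ ≤ eexp (φ (l * τ))

lemma BphiNorm_le_of_isBphiBound_imp {X Y : Ω → ℝ}
    (hX : ∃ τ : ℝ, 0 ≤ τ ∧ IsBphiBound μ φ lambda0 X τ)
    (hXY : ∀ τ, IsBphiBound μ φ lambda0 X τ → IsBphiBound μ φ lambda0 Y τ) :
    BphiNorm μ φ lambda0 Y ≤ BphiNorm μ φ lambda0 X :=
  csInf_le_csInf ⟨0, fun _ hτ => hτ.1⟩ hX fun τ hτ => ⟨hτ.1, hXY τ hτ.2⟩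

lemma isBphiBound_normalized_sum (hφeven : ∀ x : ℝ, φ (-x) = φ x) (hφ0 : φ 0 = 0)
    (hφconv : ∀ x y t : ℝ, 0 ≤ x → 0 ≤ y → 0 ≤ t → t ≤ 1 →
      φ (Real.sqrt (t * x + (1 - t) * y))
        ≤ ENNReal.ofReal t * φ (Real.sqrt x) + ENNReal.ofReal (1 - t) * φ (Real.sqrt y))
    {ξ : ℕ → Ω → ℝ} (hmeas : ∀ i, Measurable (ξ i)) (hIndep : iIndepFun ξ μ)
    (hid : ∀ i, IdentDistrib (ξ i) (ξ 0) μ μ) {τ : ℝ} (hτ : IsBphiBound μ φ lambda0 (ξ 0) τ)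
    {n : ℕ} (hn : n ≠ 0) :
    IsBphiBound μ φ lambda0
      (fun ω => (n : ℝ) ^ (-(1 : ℝ) / 2) * ∑ i ∈ Finset.range n, ξ i ω) τ := by
  set c : ℝ := (n : ℝ) ^ (-(1 : ℝ) / 2)
  have hn1 : (1 : ℝ) ≤ n := Nat.one_le_cast.mpr (Nat.one_le_iff_ne_zero.mpr hn)
  have hc0 : 0 ≤ c := by positivity
  have hc1 : c ≤ 1 := Real.rpow_le_one_of_one_le_of_nonpos hn1 (by norm_num)
  have hc_sq : (n : ℝ≥0∞) * ENNReal.ofReal (c ^ 2) = 1 := by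
    have hc_sq' : c ^ 2 = (n : ℝ)⁻¹ := by
      rw [← Real.rpow_natCast, ← Real.rpow_mul (by positivity)]
      norm_num [Real.rpow_neg_one]
    rw [hc_sq', ENNReal.ofReal_inv_of_pos (by positivity), ENNReal.ofReal_natCast,
      ENNReal.mul_inv_cancel (Nat.cast_ne_zero.mpr hn) (ENNReal.natCast_ne_top n)]
  intro l hl
  have hlc : ENNReal.ofReal |l * c| < lambda0 := by
    refine lt_of_le_of_lt (ENNReal.ofReal_le_ofReal ?_) hl
    rw [abs_mul, abs_of_nonneg hc0]
    exact mul_le_of_le_one_right (abs_nonneg l) hc1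
  calc ∫⁻ ω, ENNReal.ofReal (Real.exp (l * (c * ∑ i ∈ Finset.range n, ξ i ω))) ∂μ
      = (∫⁻ ω, ENNReal.ofReal (Real.exp (l * c * ξ 0 ω)) ∂μ) ^ n := by
        simp_rw [← mul_assoc]
        exact lintegral_exp_mul_sum_range_of_iid hmeas hIndep hid (l * c) n
    _ ≤ eexp (φ (l * c * τ)) ^ n := by gcongr; exact hτ _ hlc
    _ = eexp (n * φ (c * (l * τ))) := by rw [eexp_pow _ hn, mul_comm l c, mul_assoc]
    _ ≤ eexp (φ (l * τ)) := eexp_mono <| calc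
        (n : ℝ≥0∞) * φ (c * (l * τ)) ≤ n * (ENNReal.ofReal (c ^ 2) * φ (l * τ)) := by
          gcongr; exact le_sq_mul_of_convexOn_comp_sqrt hφeven hφ0 hφconv hc0 hc1 _
        _ = φ (l * τ) := by rw [← mul_assoc, hc_sq, one_mul]

end BphiNorm

theorem sup_BphiNorm_normalized_sums_general
    {Ω : Type*} [MeasurableSpace Ω] {μ : Measure Ω}
    {lambda0 : ℝ≥0∞}
    {φ : ℝ → ℝ≥0∞} (hφeven : ∀ x : ℝ, φ (-x) = φ x) (hφ0 : φ 0 = 0)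
    (hφconv : ∀ x y t : ℝ, 0 ≤ x → 0 ≤ y → 0 ≤ t → t ≤ 1 →
      φ (Real.sqrt (t * x + (1 - t) * y))
        ≤ ENNReal.ofReal t * φ (Real.sqrt x) + ENNReal.ofReal (1 - t) * φ (Real.sqrt y))
    {ξ : ℕ → Ω → ℝ} (hmeas : ∀ i, Measurable (ξ i))
    (hIndep : iIndepFun ξ μ)
    (hid : ∀ i, IdentDistrib (ξ i) (ξ 0) μ μ)
    (hfin : ∃ τ : ℝ, 0 ≤ τ ∧ ∀ l : ℝ, ENNReal.ofReal |l| < lambda0 →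
      ∫⁻ ω, ENNReal.ofReal (Real.exp (l * ξ 0 ω)) ∂μ ≤ eexp (φ (l * τ))) :
    IsLUB {r : ℝ | ∃ n : ℕ, 1 ≤ n ∧
        r = BphiNorm μ φ lambda0
          (fun ω => (n : ℝ) ^ (-(1 : ℝ) / 2) * ∑ i ∈ Finset.range n, ξ i ω)}
      (BphiNorm μ φ lambda0 (ξ 0)) := by
  have h_one : BphiNorm μ φ lambda0
      (fun ω => ((1 : ℕ) : ℝ) ^ (-(1 : ℝ) / 2) * ∑ i ∈ Finset.range 1, ξ i ω)
        = BphiNorm μ φ lambda0 (ξ 0) := by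
    simp
  refine ⟨?_, fun b hb => hb ⟨1, le_rfl, h_one.symm⟩⟩
  rintro r ⟨n, hn, rfl⟩
  exact BphiNorm_le_of_isBphiBound_imp hfin fun τ hτ =>
    isBphiBound_normalized_sum hφeven hφ0 hφconv hmeas hIndep hid hτ (by omega)

/-- Identity (1.9): for i.i.d. centered random variables `ξ_i` with finite
`B(φ)`-norm, where `φ` is even, vanishes at `0`, is finite on `(-λ₀, λ₀)` and
`x ↦ φ(√x)` is convex on `[0, ∞)`, the supremum over `n ≥ 1` of the `B(φ)`-norms
of the normalized sums `n^{-1/2} ∑_{i=1}^n ξ_i` equals `‖ξ_1‖_{B(φ)}`. -/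
theorem sup_BphiNorm_normalized_sums
    {Ω : Type*} [MeasurableSpace Ω] {μ : Measure Ω} [IsProbabilityMeasure μ]
    {lambda0 : ℝ≥0∞} (hl : 0 < lambda0)
    {φ : ℝ → ℝ≥0∞} (hφeven : ∀ x : ℝ, φ (-x) = φ x) (hφ0 : φ 0 = 0)
    (hφfin : ∀ x : ℝ, ENNReal.ofReal |x| < lambda0 → φ x ≠ ∞)
    (hφconv : ∀ x y t : ℝ, 0 ≤ x → 0 ≤ y → 0 ≤ t → t ≤ 1 →
      φ (Real.sqrt (t * x + (1 - t) * y))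
        ≤ ENNReal.ofReal t * φ (Real.sqrt x) + ENNReal.ofReal (1 - t) * φ (Real.sqrt y))
    {ξ : ℕ → Ω → ℝ} (hmeas : ∀ i, Measurable (ξ i))
    (hIndep : iIndepFun ξ μ)
    (hid : ∀ i, IdentDistrib (ξ i) (ξ 0) μ μ)
    (hcent : ∫ ω, ξ 0 ω ∂μ = 0)
    (hfin : ∃ τ : ℝ, 0 ≤ τ ∧ ∀ l : ℝ, ENNReal.ofReal |l| < lambda0 →
      ∫⁻ ω, ENNReal.ofReal (Real.exp (l * ξ 0 ω)) ∂μ ≤ eexp (φ (l * τ))) :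
    IsLUB {r : ℝ | ∃ n : ℕ, 1 ≤ n ∧
        r = BphiNorm μ φ lambda0
          (fun ω => (n : ℝ) ^ (-(1 : ℝ) / 2) * ∑ i ∈ Finset.range n, ξ i ω)}
      (BphiNorm μ φ lambda0 (ξ 0)) :=
  sup_BphiNorm_normalized_sums_general hφeven hφ0 hφconv hmeas hIndep hid hfin
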